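/- Let G₁ = (V₁, E₁) and G₂ = (V₂, E₂) be finite simple graphs on disjoint vertex sets, let G₁G₂ denote their disjoint union, let f : G₁G₂ → K_n be a graph homomorphism (n ≥ |V₁| + |V₂|), and let f₁, f₂ be the restrictions of f to V₁ and V₂. Then r(f) ≥ r(f₁) + r(f₂). -/

import Mathlib

open MeasureTheory

noncomputable section

open scoped Classical in
/-- A graph homomorphism `f : G → H` is even if for every edge `e` of `H`, the number of
edges of `G` mapped by `f` onto `e` is even. -/
def IsEvenHom {V V' : Type} [Fintype V] [Fintype V'] {G : SimpleGraph V} {H : SimpleGraph V'}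
    (f : G →g H) : Prop :=
  ∀ e ∈ H.edgeFinset, Even ((G.edgeFinset.filter (fun e' => Sym2.map (⇑f) e' = e)).card)

open scoped Classical in
/-- The set of `f`-odd vertices of `K_n`: those incident with an edge having an odd number
of preimage edges under `f`. -/
noncomputable def oddVerts {V : Type} [Fintype V] {G : SimpleGraph V} {n : ℕ}
    (f : G →g (⊤ : SimpleGraph (Fin n))) : Finset (Fin n) :=
  Finset.univ.filter (fun v => ∃ e ∈ (⊤ : SimpleGraph (Fin n)).edgeFinset,
    Odd ((G.edgeFinset.filter (fun e' => Sym2.map (⇑f) e' = e)).card) ∧ v ∈ e)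

open scoped Classical in
/-- `r(f) = |V(G)| − |f(V(G))| + |V_odd(f)|/2`. -/
noncomputable def rval {V : Type} [Fintype V] {G : SimpleGraph V} {n : ℕ}
    (f : G →g (⊤ : SimpleGraph (Fin n))) : ℝ :=
  (Fintype.card V : ℝ) - ((Finset.univ.image ⇑f).card : ℝ) + ((oddVerts f).card : ℝ) / 2

/-- `r̄(G) = min { r(f) : f : G → K_n }`. -/
noncomputable def rbar {V : Type} [Fintype V] (G : SimpleGraph V) (n : ℕ) : ℝ :=
  sInf {x : ℝ | ∃ f : G →g (⊤ : SimpleGraph (Fin n)), rval f = x}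

open scoped Classical in
/-- `p(G) = min { |V(G)| − |f(V(G))| : f : G → K_n even }`. -/
noncomputable def pval {V : Type} [Fintype V] (G : SimpleGraph V) (n : ℕ) : ℝ :=
  sInf {x : ℝ | ∃ f : G →g (⊤ : SimpleGraph (Fin n)), IsEvenHom f ∧
    (Fintype.card V : ℝ) - ((Finset.univ.image ⇑f).card : ℝ) = x}

/-- The disjoint union of `k` copies of `G`. -/
def copies {V : Type} (G : SimpleGraph V) (k : ℕ) : SimpleGraph (Fin k × V) where
  Adj a b := a.1 = b.1 ∧ G.Adj a.2 b.2
  symm := ⟨fun _ _ hab => ⟨hab.1.symm, G.symm.symm _ _ hab.2⟩⟩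
  loopless := ⟨fun a ha => G.loopless.irrefl a.2 ha.2⟩

/-! Edge multiplicities add up over the two components: the number of edges of `G₁G₂` mapped
onto an edge `e` of `K_n` is the sum of the numbers for `f₁` and `f₂`. Hence a vertex that is
`f₁`- or `f₂`-odd but not `f`-odd lies on an edge on which both multiplicities are odd, so it lies
in `I = f(V₁) ∩ f(V₂)`; so does every vertex that is both `f₁`- and `f₂`-odd. Counting gives
`|V_odd(f₁)| + |V_odd(f₂)| ≤ |V_odd(f)| + 2|I|`, and `|f(V)| = |f(V₁)| + |f(V₂)| - |I|` turns this
into `r(f₁) + r(f₂) ≤ r(f)`. -/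

open scoped Classical
open Finset

lemma Finset.card_add_card_le_of_union_subset {α : Type*} [DecidableEq α] {A B C I : Finset α}
    (hunion : A ∪ B ⊆ C ∪ I) (hinter : A ∩ B ⊆ I) : #A + #B ≤ #C + 2 * #I := by
  have h₁ := card_union_add_card_inter A B
  have h₂ := (card_le_card hunion).trans (card_union_le C I)
  have h₃ := card_le_card hinter
  omega

namespace SimpleGraph

variable {V V₁ V₂ W : Type} [Fintype V] [Fintype V₁] [Fintype V₂] [DecidableEq W]

lemma edgeFinset_sum (G₁ : SimpleGraph V₁) (G₂ : SimpleGraph V₂) :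
    (G₁.sum G₂).edgeFinset =
      G₁.edgeFinset.map Function.Embedding.inl.sym2Map ∪
        G₂.edgeFinset.map Function.Embedding.inr.sym2Map := by
  ext e
  induction e using Sym2.ind with
  | _ x y => cases x <;> cases y <;> simp [Sym2.exists, and_or_left, exists_or, adj_comm]

def edgeFiberCard (G : SimpleGraph V) (g : V → W) (e : Sym2 W) : ℕ :=
  #{e' ∈ G.edgeFinset | Sym2.map g e' = e}

lemma edgeFiberCard_sum (G₁ : SimpleGraph V₁) (G₂ : SimpleGraph V₂) (g : V₁ ⊕ V₂ → W)
    (e : Sym2 W) :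
    (G₁.sum G₂).edgeFiberCard g e =
      G₁.edgeFiberCard (g ∘ Sum.inl) e + G₂.edgeFiberCard (g ∘ Sum.inr) e := by
  have hdisj : Disjoint (G₁.edgeFinset.map Function.Embedding.inl.sym2Map)
      (G₂.edgeFinset.map Function.Embedding.inr.sym2Map) := by
    simp [Finset.disjoint_left, Sym2.forall]
  rw [edgeFiberCard, edgeFinset_sum, filter_union,
    card_union_of_disjoint (disjoint_filter_filter hdisj), filter_map, filter_map, card_map,
    card_map]
  simp only [edgeFiberCard, Function.comp_def, Function.Embedding.sym2Map_apply, Sym2.map_map]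
  rfl

lemma mem_image_of_edgeFiberCard_ne_zero {G : SimpleGraph V} {g : V → W} {e : Sym2 W} {w : W}
    (h : G.edgeFiberCard g e ≠ 0) (hw : w ∈ e) : w ∈ univ.image g := by
  obtain ⟨e', -, rfl⟩ : ∃ e' ∈ G.edgeFinset, Sym2.map g e' = e := by
    simpa [edgeFiberCard, filter_nonempty_iff] using h
  obtain ⟨v, -, rfl⟩ := Sym2.mem_map.1 hw
  exact mem_image_of_mem g (mem_univ v)

end SimpleGraph

section OddVerts

open SimpleGraph

variable {V V₁ V₂ : Type} [Fintype V] [Fintype V₁] [Fintype V₂] {n : ℕ}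

lemma mem_oddVerts {G : SimpleGraph V} {f : G →g (⊤ : SimpleGraph (Fin n))} {v : Fin n} :
    v ∈ oddVerts f ↔
      ∃ e ∈ (⊤ : SimpleGraph (Fin n)).edgeFinset, Odd (G.edgeFiberCard f e) ∧ v ∈ e := by
  simp only [oddVerts, edgeFiberCard, mem_filter, mem_univ, true_and]

lemma oddVerts_subset_image {G : SimpleGraph V} (f : G →g (⊤ : SimpleGraph (Fin n))) :
    oddVerts f ⊆ univ.image f := by
  intro v hv
  obtain ⟨e, -, hodd, hve⟩ := mem_oddVerts.1 hv
  exact mem_image_of_edgeFiberCard_ne_zero hodd.pos.ne' hve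

variable {G₁ : SimpleGraph V₁} {G₂ : SimpleGraph V₂}

lemma image_univ_eq_image_comp_sumInl_union (f : G₁.sum G₂ →g (⊤ : SimpleGraph (Fin n))) :
    univ.image f = univ.image (f.comp Embedding.sumInl.toHom) ∪
      univ.image (f.comp Embedding.sumInr.toHom) := by
  ext v
  simp [Sum.exists]

lemma oddVerts_comp_sumInl_union_subset (f : G₁.sum G₂ →g (⊤ : SimpleGraph (Fin n))) :
    oddVerts (f.comp Embedding.sumInl.toHom) ∪ oddVerts (f.comp Embedding.sumInr.toHom) ⊆
      oddVerts f ∪ (univ.image (f.comp Embedding.sumInl.toHom) ∩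
        univ.image (f.comp Embedding.sumInr.toHom)) := by
  intro v hv
  by_cases hvf : v ∈ oddVerts f
  · exact mem_union_left _ hvf
  refine mem_union_right _ ?_
  obtain ⟨e, he, hodd, hve⟩ : ∃ e ∈ (⊤ : SimpleGraph (Fin n)).edgeFinset,
      (Odd (G₁.edgeFiberCard (f ∘ Sum.inl) e) ∨ Odd (G₂.edgeFiberCard (f ∘ Sum.inr) e)) ∧
        v ∈ e := by
    rcases mem_union.1 hv with hv | hv <;> obtain ⟨e, he, hodd, hve⟩ := mem_oddVerts.1 hv
    exacts [⟨e, he, .inl hodd, hve⟩, ⟨e, he, .inr hodd, hve⟩]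
  have heven : Even (G₁.edgeFiberCard (f ∘ Sum.inl) e + G₂.edgeFiberCard (f ∘ Sum.inr) e) := by
    rw [← edgeFiberCard_sum, ← Nat.not_odd_iff_even]
    exact fun h => hvf (mem_oddVerts.2 ⟨e, he, h, hve⟩)
  obtain ⟨h₁, h₂⟩ : Odd (G₁.edgeFiberCard (f ∘ Sum.inl) e) ∧
      Odd (G₂.edgeFiberCard (f ∘ Sum.inr) e) := by
    simp only [Nat.odd_iff, Nat.even_iff] at heven hodd ⊢
    omega
  exact mem_inter.2 ⟨mem_image_of_edgeFiberCard_ne_zero h₁.pos.ne' hve,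
    mem_image_of_edgeFiberCard_ne_zero h₂.pos.ne' hve⟩

end OddVerts

theorem rval_superadditive {V₁ V₂ : Type} [Fintype V₁] [Fintype V₂]
    (G₁ : SimpleGraph V₁) (G₂ : SimpleGraph V₂) {n : ℕ}
    (f : (G₁.sum G₂) →g (⊤ : SimpleGraph (Fin n)))
    (f₁ : G₁ →g (⊤ : SimpleGraph (Fin n))) (hf₁ : f₁ = f.comp ⟨Sum.inl, fun h => h⟩)
    (f₂ : G₂ →g (⊤ : SimpleGraph (Fin n))) (hf₂ : f₂ = f.comp ⟨Sum.inr, fun h => h⟩) :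
    rval f₁ + rval f₂ ≤ rval f := by
  replace hf₁ : f.comp SimpleGraph.Embedding.sumInl.toHom = f₁ := hf₁.symm
  replace hf₂ : f.comp SimpleGraph.Embedding.sumInr.toHom = f₂ := hf₂.symm
  have hodd := card_add_card_le_of_union_subset (oddVerts_comp_sumInl_union_subset f)
    (inter_subset_inter (oddVerts_subset_image _) (oddVerts_subset_image _))
  have himage := image_univ_eq_image_comp_sumInl_union f
  rw [hf₁, hf₂] at hodd himage
  have hcard := card_union_add_card_inter (univ.image f₁) (univ.image f₂)
  rw [← himage] at hcard
  rify at hodd hcard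
  simp only [rval, Fintype.card_sum, Nat.cast_add]
  linarith
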